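/- arXiv:1507.06977 — 3 statements merged into one kernel-verified Lean document; each statement's English description precedes it below -/
import Mathlib

section
/- Let A and B be d-dimensional jointly Gaussian vectors with diagonal covariance matrices Σ_A and Σ_B, and cross-covariance matrix Σ_{A,B}. Let diag(Σ_{A,B}) denote the diagonal matrix with the same diagonal as Σ_{A,B}. Then det([[Σ_A, diag(Σ_{A,B})], [diag(Σ_{A,B}), Σ_B]]) ≥ det([[Σ_A, Σ_{A,B}], [Σ_{A,B}ᵀ, Σ_B]]). -/
/-!
Reindex the joint covariance matrix by `Bool × Fin d`, pairing the `i`-th coordinates of `A`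
and `B`. Its `i`-th diagonal `2 × 2` block is `[[SA i i, SAB i i], [SAB i i, SB i i]]`, and since
`SA`, `SB` are diagonal, the matrix with `SAB` replaced by its diagonal is exactly the
block-diagonal matrix made of these blocks. So the claim is the iterated Fischer inequality
`det M ≤ ∏ₖ det Mₖₖ` for positive semidefinite `M`. Fischer's inequality itself follows from
`det [[A, B], [Bᴴ, D]] = det A · det (D - Bᴴ A⁻¹ B)`, positivity of the Schur complement, and
monotonicity of `det` on positive semidefinite matrices.
-/

open MeasureTheory ProbabilityTheory Matrix

/-- A random vector `X` is (multivariate) Gaussian with mean `m` and covariance matrix `S`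
if every linear functional of `X` is a one-dimensional Gaussian. -/
def IsGaussianRV {Ω : Type*} [MeasurableSpace Ω] (P : Measure Ω)
    {ι : Type*} [Fintype ι] (X : Ω → ι → ℝ) (m : ι → ℝ) (S : Matrix ι ι ℝ) : Prop :=
  ∀ t : ι → ℝ,
    P.map (fun ω => ∑ i, t i * X ω i) =
      gaussianReal (∑ i, t i * m i) (Real.toNNReal (∑ i, ∑ j, t i * S i j * t j))

def Equiv.sumProdFinSucc (m : Type*) (d : ℕ) : m ⊕ m × Fin d ≃ m × Fin (d + 1) where
  toFun := Sum.elim (fun i => (i, 0)) fun p => (p.1, p.2.succ)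
  invFun p := Fin.cases (Sum.inl p.1) (fun k => Sum.inr (p.1, k)) p.2
  left_inv := by rintro (i | ⟨i, k⟩) <;> rfl
  right_inv := by rintro ⟨i, k⟩; cases k using Fin.cases <;> rfl

namespace Matrix

theorem blockDiagonal_blockDiag_of_apply_ne {m n o α : Type*} [DecidableEq o] [Zero α]
    {M : Matrix (m × o) (n × o) α} (h : ∀ i j k k', k ≠ k' → M (i, k) (j, k') = 0) :
    blockDiagonal M.blockDiag = M := by
  ext ⟨i, k⟩ ⟨j, k'⟩
  rcases eq_or_ne k k' with rfl | hk
  · rw [blockDiagonal_apply_eq, blockDiag_apply]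
  · rw [blockDiagonal_apply_ne _ _ _ hk, h i j k k' hk]

variable {m n : Type*} [Fintype m] [Fintype n] [DecidableEq m] [DecidableEq n]

theorem PosSemidef.one_le_det_one_add {Z : Matrix n n ℝ} (hZ : Z.PosSemidef) :
    1 ≤ (1 + Z).det := by
  have hZ_sa : IsSelfAdjoint Z := hZ.1
  have h : 1 + Z = cfc (fun x : ℝ => 1 + x) Z := by
    rw [cfc_const_add _ _ Z, cfc_id' ℝ Z, map_one]
  rw [h, hZ.1.cfc_eq, IsHermitian.cfc, det_map, det_diagonal]
  exact Finset.one_le_prod fun i _ => by simpa using hZ.eigenvalues_nonneg i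

open scoped MatrixOrder in
theorem PosSemidef.det_le_det_add {X Y : Matrix n n ℝ} (hX : X.PosSemidef)
    (hY : Y.PosSemidef) : X.det ≤ (X + Y).det := by
  rcases eq_or_ne X.det 0 with hX0 | hX0
  · exact hX0 ▸ (hX.add hY).det_nonneg
  obtain ⟨B, rfl⟩ := CStarAlgebra.nonneg_iff_eq_star_mul_self.mp hY.nonneg
  rw [det_add_mul _ _ (isUnit_iff_ne_zero.mpr hX0)]
  exact le_mul_of_one_le_right hX.det_nonneg
    (hX.inv.mul_mul_conjTranspose_same B).one_le_det_one_add

theorem PosSemidef.det_eq_zero_of_det_toBlocks₁₁_eq_zero {M : Matrix (m ⊕ n) (m ⊕ n) ℝ}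
    (hM : M.PosSemidef) (hA : M.toBlocks₁₁.det = 0) : M.det = 0 := by
  obtain ⟨v, hv, hAv⟩ := exists_mulVec_eq_zero_iff.mpr hA
  have hv' : Sum.elim v (0 : n → ℝ) ≠ 0 := fun h => hv (funext fun i => congrFun h (Sum.inl i))
  refine exists_mulVec_eq_zero_iff.mp ⟨_, hv', ?_⟩
  rw [← hM.dotProduct_mulVec_zero_iff, ← fromBlocks_toBlocks M, fromBlocks_mulVec]
  simp [hAv]

theorem PosSemidef.det_le_det_toBlocks₁₁_mul_det_toBlocks₂₂ {M : Matrix (m ⊕ n) (m ⊕ n) ℝ}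
    (hM : M.PosSemidef) : M.det ≤ M.toBlocks₁₁.det * M.toBlocks₂₂.det := by
  have hA : M.toBlocks₁₁.PosSemidef := hM.submatrix Sum.inl
  rcases eq_or_ne M.toBlocks₁₁.det 0 with hA0 | hA0
  · rw [hM.det_eq_zero_of_det_toBlocks₁₁_eq_zero hA0, hA0, zero_mul]
  set A := M.toBlocks₁₁
  set B := M.toBlocks₁₂
  set D := M.toBlocks₂₂
  have hBC : Bᴴ = M.toBlocks₂₁ :=
    (isHermitian_fromBlocks_iff.mp ((fromBlocks_toBlocks M).symm ▸ hM.1)).2.1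
  have hM_eq : M = fromBlocks A B Bᴴ D := by rw [hBC, fromBlocks_toBlocks]
  let _ := invertibleOfIsUnitDet A (isUnit_iff_ne_zero.mpr hA0)
  have hSchur : (D - Bᴴ * A⁻¹ * B).PosSemidef :=
    ((hA.posDef_iff_det_ne_zero.mpr hA0).fromBlocks₁₁ B D).mp (hM_eq ▸ hM)
  rw [hM_eq, det_fromBlocks₁₁, invOf_eq_nonsing_inv]
  refine mul_le_mul_of_nonneg_left ?_ hA.det_nonneg
  simpa using hSchur.det_le_det_add (hA.inv.conjTranspose_mul_mul_same B)

theorem PosSemidef.det_le_prod_det_blockDiag :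
    ∀ {d : ℕ} {M : Matrix (m × Fin d) (m × Fin d) ℝ}, M.PosSemidef →
      M.det ≤ ∏ k, (M.blockDiag k).det
  | 0, M, _ => by simp
  | d + 1, M, hM => by
    let e := Equiv.sumProdFinSucc m d
    have hM' : (M.submatrix e e).PosSemidef := hM.submatrix e
    calc M.det = (M.submatrix e e).det := (det_submatrix_equiv_self e M).symm
      _ ≤ (M.submatrix e e).toBlocks₁₁.det * (M.submatrix e e).toBlocks₂₂.det :=
        hM'.det_le_det_toBlocks₁₁_mul_det_toBlocks₂₂
      _ ≤ (M.blockDiag 0).det * ∏ k : Fin d, (M.blockDiag k.succ).det :=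
        mul_le_mul_of_nonneg_left (hM'.submatrix Sum.inr).det_le_prod_det_blockDiag
          (hM'.submatrix Sum.inl).det_nonneg
      _ = ∏ k, (M.blockDiag k).det := (Fin.prod_univ_succ fun k => (M.blockDiag k).det).symm

end Matrix

theorem det_diag_offdiag_ge_general {d : ℕ}
    (SA SB SAB : Matrix (Fin d) (Fin d) ℝ)
    (hSA : SA.IsDiag) (hSB : SB.IsDiag)
    (hpsd : (Matrix.fromBlocks SA SAB SABᵀ SB).PosSemidef) :
    (Matrix.fromBlocks SA SAB SABᵀ SB).det ≤
      (Matrix.fromBlocks SA (Matrix.diagonal fun i => SAB i i)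
        (Matrix.diagonal fun i => SAB i i) SB).det := by
  set M := fromBlocks SA SAB SABᵀ SB
  set N := fromBlocks SA (diagonal fun i => SAB i i) (diagonal fun i => SAB i i) SB
  let e := Equiv.boolProdEquivSum (Fin d)
  have h_blocks : (M.submatrix e e).blockDiag = (N.submatrix e e).blockDiag := by
    funext k
    ext (_ | _) (_ | _) <;> simp [M, N, e, blockDiag_apply]
  have hN : blockDiagonal (N.submatrix e e).blockDiag = N.submatrix e e :=
    blockDiagonal_blockDiag_of_apply_ne fun a b k l hkl => by
      cases a <;> cases b <;> simp [N, e, hSA hkl, hSB hkl, hkl]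
  calc M.det = (M.submatrix e e).det := (det_submatrix_equiv_self e M).symm
    _ ≤ ∏ k, ((M.submatrix e e).blockDiag k).det := (hpsd.submatrix e).det_le_prod_det_blockDiag
    _ = (N.submatrix e e).det := by rw [h_blocks, ← det_blockDiagonal, hN]
    _ = N.det := det_submatrix_equiv_self e N

/-- Let `A` and `B` be `d`-dimensional jointly Gaussian vectors with diagonal covariance
matrices `SA`, `SB` and cross-covariance matrix `SAB` (so the joint covariance matrix
`[[SA, SAB], [SABᵀ, SB]]` is positive semi-definite). Then replacing the off-diagonal block
`SAB` by the diagonal matrix `diag(SAB)` does not decrease the determinant: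
`det [[SA, diag(SAB)], [diag(SAB), SB]] ≥ det [[SA, SAB], [SABᵀ, SB]]`. -/
theorem det_diag_offdiag_ge {Ω : Type*} [MeasurableSpace Ω]
    (P : Measure Ω) [IsProbabilityMeasure P] {d : ℕ}
    (A B : Ω → Fin d → ℝ) (μA μB : Fin d → ℝ)
    (SA SB SAB : Matrix (Fin d) (Fin d) ℝ)
    (hSA : SA.IsDiag) (hSB : SB.IsDiag)
    (hjoint : IsGaussianRV P (fun ω => Sum.elim (A ω) (B ω)) (Sum.elim μA μB)
      (Matrix.fromBlocks SA SAB SABᵀ SB))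
    (hpsd : (Matrix.fromBlocks SA SAB SABᵀ SB).PosSemidef) :
    (Matrix.fromBlocks SA SAB SABᵀ SB).det ≤
      (Matrix.fromBlocks SA (Matrix.diagonal fun i => SAB i i)
        (Matrix.diagonal fun i => SAB i i) SB).det :=
  det_diag_offdiag_ge_general SA SB SAB hSA hSB hpsd
end

section
/- Let k : I×I → ℝ be a twice continuously differentiable symmetric positive semi-definite kernel on an interval I. Then for any times t_1,…,t_n ∈ I, the 2n×2n matrix with blocks cov(z_{t_i}, z_{t_j}) = k(t_i,t_j), cov(z_{t_i}, z'_{t_j}) = ∂k/∂y(t_i,t_j), cov(z'_{t_i}, z'_{t_j}) = ∂²k/(∂x∂y)(t_i,t_j) is positive semi-definite. -/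
open Matrix

noncomputable section

/-- Partial derivative of a bivariate kernel with respect to its first argument, within `I`. -/
def pdx (I : Set ℝ) (k : ℝ → ℝ → ℝ) (u v : ℝ) : ℝ :=
  derivWithin (fun x => k x v) I u

/-- Partial derivative of a bivariate kernel with respect to its second argument, within `I`. -/
def pdy (I : Set ℝ) (k : ℝ → ℝ → ℝ) (u v : ℝ) : ℝ :=
  derivWithin (fun y => k u y) I v

/-- Second mixed partial derivative `∂²k/(∂x∂y)` of a bivariate kernel, within `I`. -/
def pdxy (I : Set ℝ) (k : ℝ → ℝ → ℝ) (u v : ℝ) : ℝ :=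
  derivWithin (fun x => pdy I k x v) I u

/-!
The block matrix is the limit, as `h → 0⁺`, of the covariance matrices of the values `z (t i)`
and the difference quotients `(z (t i + h * d i) - z (t i)) / (h * d i)`, where the directions
`d i ≠ 0` keep the points `t i + h * d i` inside `I`. Each of these is `Bᴴ G B` with `G` the
Gram matrix of `k` at the `2n` points `t i`, `t i + h * d i`, hence positive semidefinite, and
the positive semidefinite matrices form a closed set. The mixed second difference quotient
converges to `∂²k/∂x∂y` by the mean value inequality, applied once in each variable, and the
continuity of `∂²k/∂x∂y`.
-/

open Set Filter Topology

theorem Matrix.isClosed_setOf_posSemidef {n R : Type*} [Fintype n] [Ring R] [PartialOrder R]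
    [StarRing R] [TopologicalSpace R] [IsTopologicalRing R] [ContinuousStar R]
    [OrderClosedTopology R] :
    IsClosed {M : Matrix n n R | M.PosSemidef} := by
  simp only [posSemidef_iff_dotProduct_mulVec, ofPred_and, ofPred_forall]
  exact (isClosed_eq (by fun_prop) continuous_id).inter
    (isClosed_iInter fun x => isClosed_le continuous_const (by fun_prop))

theorem Set.OrdConnected.uniqueDiffOn {s : Set ℝ} (hs : s.OrdConnected) (hnt : s.Nontrivial) :
    UniqueDiffOn ℝ s := fun x hx =>
  let ⟨_, hc, hcx⟩ := hnt.exists_ne x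
  (uniqueDiffOn_uIcc hcx.symm x left_mem_uIcc).mono (hs.uIcc_subset hx hc)

theorem Set.Subsingleton.derivWithin_eq_zero {s : Set ℝ} (hs : s.Subsingleton) {x : ℝ}
    (hx : x ∈ s) (f : ℝ → ℝ) : derivWithin f s x = 0 := by
  refine derivWithin_zero_of_not_accPt ?_
  have : s \ {x} = ∅ := Set.sdiff_eq_empty.2 fun y hy => hs hy hx
  rw [accPt_principal_iff_nhdsWithin, this, nhdsWithin_empty]
  exact not_neBot.2 rfl

section PartialDerivatives

variable {s : Set ℝ} {G : ℝ → ℝ → ℝ} {x y : ℝ}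

theorem hasDerivWithinAt_pdx (hG : DifferentiableOn ℝ (Function.uncurry G) (s ×ˢ s))
    (hx : x ∈ s) (hy : y ∈ s) : HasDerivWithinAt (fun x => G x y) (pdx s G x y) s x :=
  DifferentiableWithinAt.hasDerivWithinAt <| (hG (x, y) (mk_mem_prod hx hy)).comp x
    (differentiableWithinAt_id.prodMk (differentiableWithinAt_const y))
    fun _ hx' => mk_mem_prod hx' hy

theorem hasDerivWithinAt_pdy (hG : DifferentiableOn ℝ (Function.uncurry G) (s ×ˢ s))
    (hx : x ∈ s) (hy : y ∈ s) : HasDerivWithinAt (G x) (pdy s G x y) s y :=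
  DifferentiableWithinAt.hasDerivWithinAt <| (hG (x, y) (mk_mem_prod hx hy)).comp y
    ((differentiableWithinAt_const x).prodMk differentiableWithinAt_id)
    fun _ hy' => mk_mem_prod hx hy'

theorem pdx_eq_fderivWithin (hs : UniqueDiffOn ℝ s)
    (hG : DifferentiableOn ℝ (Function.uncurry G) (s ×ˢ s)) (hx : x ∈ s) (hy : y ∈ s) :
    pdx s G x y = fderivWithin ℝ (Function.uncurry G) (s ×ˢ s) (x, y) (1, 0) := by
  have h :=
    (hG (x, y) (mk_mem_prod hx hy)).hasFDerivWithinAt.comp_hasDerivWithinAt x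
      ((hasDerivWithinAt_id x s).prodMk (hasDerivWithinAt_const x s y))
      fun _ hx' => mk_mem_prod hx' hy
  exact h.derivWithin (hs x hx)

theorem pdy_eq_fderivWithin (hs : UniqueDiffOn ℝ s)
    (hG : DifferentiableOn ℝ (Function.uncurry G) (s ×ˢ s)) (hx : x ∈ s) (hy : y ∈ s) :
    pdy s G x y = fderivWithin ℝ (Function.uncurry G) (s ×ˢ s) (x, y) (0, 1) := by
  have h :=
    (hG (x, y) (mk_mem_prod hx hy)).hasFDerivWithinAt.comp_hasDerivWithinAt y
      ((hasDerivWithinAt_const y s x).prodMk (hasDerivWithinAt_id y s))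
      fun _ hy' => mk_mem_prod hx hy'
  exact h.derivWithin (hs y hy)

theorem ContDiffOn.continuousOn_uncurry_pdx (hs : UniqueDiffOn ℝ s)
    (hG : ContDiffOn ℝ 1 (Function.uncurry G) (s ×ˢ s)) :
    ContinuousOn (Function.uncurry (pdx s G)) (s ×ˢ s) :=
  ((hG.continuousOn_fderivWithin (hs.prod hs) le_rfl).clm_apply continuousOn_const).congr
    fun _ hp => pdx_eq_fderivWithin hs (hG.differentiableOn one_ne_zero) hp.1 hp.2

theorem ContDiffOn.uncurry_pdy (hs : UniqueDiffOn ℝ s)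
    (hG : ContDiffOn ℝ 2 (Function.uncurry G) (s ×ˢ s)) :
    ContDiffOn ℝ 1 (Function.uncurry (pdy s G)) (s ×ˢ s) :=
  ((hG.fderivWithin (hs.prod hs) (by norm_num)).clm_apply contDiffOn_const).congr
    fun _ hp => pdy_eq_fderivWithin hs (hG.differentiableOn two_ne_zero) hp.1 hp.2

end PartialDerivatives

theorem HasDerivWithinAt.tendsto_slope_along {f : ℝ → ℝ} {f' x d : ℝ} {s : Set ℝ}
    (hf : HasDerivWithinAt f f' s x) (hd : d ≠ 0) (hs : ∀ᶠ h in 𝓝[>] 0, x + h * d ∈ s) :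
    Tendsto (fun h => (f (x + h * d) - f x) / (h * d)) (𝓝[>] 0) (𝓝 f') := by
  have hmap : Tendsto (fun h => x + h * d) (𝓝[>] 0) (𝓝[s \ {x}] x) := by
    refine tendsto_nhdsWithin_iff.2 ⟨?_, ?_⟩
    · exact ((Continuous.tendsto' (by fun_prop) 0 x (by simp))).mono_left nhdsWithin_le_nhds
    · filter_upwards [hs, self_mem_nhdsWithin] with h hmem (hpos : 0 < h)
      exact ⟨hmem, by simpa [hd] using hpos.ne'⟩
  refine ((hasDerivWithinAt_iff_tendsto_slope.1 hf).comp hmap).congr fun h => ?_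
  simp [slope_def_field]

def mixedDiff (f : ℝ → ℝ → ℝ) (x x' y y' : ℝ) : ℝ :=
  f x' y' - f x' y - f x y' + f x y

section MixedDifference

variable {s : Set ℝ} {f g D : ℝ → ℝ → ℝ}

theorem abs_mixedDiff_sub_le (hs : s.OrdConnected)
    (hf : ∀ x ∈ s, ∀ y ∈ s, HasDerivWithinAt (f x) (g x y) s y)
    (hg : ∀ x ∈ s, ∀ y ∈ s, HasDerivWithinAt (fun x => g x y) (D x y) s x)
    {x x' y y' c ε : ℝ} (hx : x ∈ s) (hx' : x' ∈ s) (hy : y ∈ s) (hy' : y' ∈ s)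
    (hD : ∀ ξ ∈ uIcc x x', ∀ η ∈ uIcc y y', |D ξ η - c| ≤ ε) :
    |mixedDiff f x x' y y' - (x' - x) * (y' - y) * c| ≤ ε * |x' - x| * |y' - y| := by
  have hX : uIcc x x' ⊆ s := hs.uIcc_subset hx hx'
  have hY : uIcc y y' ⊆ s := hs.uIcc_subset hy hy'
  have hgx : ∀ η ∈ uIcc y y', |g x' η - g x η - (x' - x) * c| ≤ ε * |x' - x| := by
    intro η hη
    have h := (convex_uIcc x x').norm_image_sub_le_of_norm_hasDerivWithin_le
      (f := fun ξ => g ξ η - ξ * c) (f' := fun ξ => D ξ η - c)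
      (fun ξ hξ => ((hg ξ (hX hξ) η (hY hη)).mono hX).sub
        (hasDerivAt_mul_const c).hasDerivWithinAt)
      (fun ξ hξ => hD ξ hξ η hη) left_mem_uIcc right_mem_uIcc
    rw [Real.norm_eq_abs, Real.norm_eq_abs] at h
    rwa [show g x' η - g x η - (x' - x) * c = g x' η - x' * c - (g x η - x * c) by ring]
  have h := (convex_uIcc y y').norm_image_sub_le_of_norm_hasDerivWithin_le
    (f := fun η => f x' η - f x η - η * ((x' - x) * c))
    (f' := fun η => g x' η - g x η - (x' - x) * c)
    (fun η hη => (((hf x' hx' η (hY hη)).sub (hf x hx η (hY hη))).mono hY).sub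
      (hasDerivAt_mul_const _).hasDerivWithinAt) hgx left_mem_uIcc right_mem_uIcc
  simp only [Real.norm_eq_abs] at h
  convert h using 2
  unfold mixedDiff
  ring

theorem tendsto_mixedDiff_div (hs : s.OrdConnected)
    (hf : ∀ x ∈ s, ∀ y ∈ s, HasDerivWithinAt (f x) (g x y) s y)
    (hg : ∀ x ∈ s, ∀ y ∈ s, HasDerivWithinAt (fun x => g x y) (D x y) s x)
    {u v d e : ℝ} (hu : u ∈ s) (hv : v ∈ s) (hd : d ≠ 0) (he : e ≠ 0)
    (hud : ∀ᶠ h in 𝓝[>] 0, u + h * d ∈ s) (hve : ∀ᶠ h in 𝓝[>] 0, v + h * e ∈ s)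
    (hD : ContinuousWithinAt (Function.uncurry D) (s ×ˢ s) (u, v)) :
    Tendsto (fun h => mixedDiff f u (u + h * d) v (v + h * e) / (h * d * (h * e)))
      (𝓝[>] 0) (𝓝 (D u v)) := by
  rw [Metric.tendsto_nhds]
  intro ε hε
  obtain ⟨r, hr, hball⟩ := Metric.continuousWithinAt_iff.1 hD (ε / 2) (half_pos hε)
  have hsmall : ∀ᶠ h in 𝓝[>] (0 : ℝ), h * (|d| + |e|) < r :=
    (tendsto_nhdsWithin_of_tendsto_nhds (Continuous.tendsto'
      (f := fun h : ℝ => h * (|d| + |e|)) (by fun_prop) 0 0 (by simp))).eventually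
      (gt_mem_nhds hr)
  filter_upwards [hud, hve, hsmall, self_mem_nhdsWithin] with h hud hve hsmall (hpos : 0 < h)
  have hrect : ∀ ξ ∈ uIcc u (u + h * d), ∀ η ∈ uIcc v (v + h * e),
      |D ξ η - D u v| ≤ ε / 2 := by
    intro ξ hξ η hη
    have hξu := abs_sub_left_of_mem_uIcc hξ
    have hηv := abs_sub_left_of_mem_uIcc hη
    simp only [add_sub_cancel_left, abs_mul, abs_of_pos hpos] at hξu hηv
    refine (hball (mk_mem_prod (hs.uIcc_subset hu hud hξ) (hs.uIcc_subset hv hve hη)) ?_).le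
    rw [Prod.dist_eq, Real.dist_eq, Real.dist_eq, max_lt_iff]
    constructor <;> nlinarith [abs_nonneg d, abs_nonneg e]
  have key := abs_mixedDiff_sub_le hs hf hg hu hud hv hve hrect
  simp only [add_sub_cancel_left] at key
  have hde : 0 < |h * d| * |h * e| := by positivity
  rw [Real.dist_eq]
  calc |mixedDiff f u (u + h * d) v (v + h * e) / (h * d * (h * e)) - D u v|
      = |mixedDiff f u (u + h * d) v (v + h * e) - h * d * (h * e) * D u v| /
          (|h * d| * |h * e|) := by
        rw [← abs_mul, ← abs_div, sub_div, mul_div_cancel_left₀ _ (by positivity)]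
    _ ≤ ε / 2 := by rw [div_le_iff₀ hde]; linarith
    _ < ε := half_lt_self hε

end MixedDifference

def kernelMatrix {ι : Type*} (k : ℝ → ℝ → ℝ) (p : ι → ℝ) : Matrix ι ι ℝ :=
  of fun a b => k (p a) (p b)

theorem posSemidef_kernelMatrix_of_fin {I : Set ℝ} {k : ℝ → ℝ → ℝ}
    (hpsd : ∀ (n : ℕ) (t : Fin n → ℝ), (∀ i, t i ∈ I) →
      (Matrix.of fun i j => k (t i) (t j)).PosSemidef)
    {ι : Type*} [Fintype ι] {p : ι → ℝ} (hp : ∀ a, p a ∈ I) :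
    (kernelMatrix k p).PosSemidef := by
  let e := Fintype.equivFin ι
  convert (hpsd _ (p ∘ e.symm) fun _ => hp _).submatrix e using 1
  ext a b
  simp [kernelMatrix]

section DiffQuotCov

variable {ι : Type*} (k : ℝ → ℝ → ℝ) (t d : ι → ℝ) (h : ℝ)

/-- The covariance matrix of `z (t i)` and `(z (t i + h * d i) - z (t i)) / (h * d i)` for a
centred process `z` with covariance `k`. -/
def diffQuotCov : Matrix (ι ⊕ ι) (ι ⊕ ι) ℝ :=
  fromBlocks (kernelMatrix k t)
    (of fun i j => (k (t i) (t j + h * d j) - k (t i) (t j)) / (h * d j))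
    (of fun i j => (k (t i + h * d i) (t j) - k (t i) (t j)) / (h * d i))
    (of fun i j =>
      mixedDiff k (t i) (t i + h * d i) (t j) (t j + h * d j) / (h * d i * (h * d j)))

def diffQuotCoeffs [DecidableEq ι] : Matrix (ι ⊕ ι) (ι ⊕ ι) ℝ :=
  fromBlocks 1 (-diagonal fun i => (h * d i)⁻¹) 0 (diagonal fun i => (h * d i)⁻¹)

theorem diffQuotCov_eq_conjTranspose_mul_mul [Fintype ι] [DecidableEq ι] :
    diffQuotCov k t d h =
      (diffQuotCoeffs d h)ᴴ * kernelMatrix k (Sum.elim t fun i => t i + h * d i) *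
        diffQuotCoeffs d h := by
  rw [← fromBlocks_toBlocks (kernelMatrix k _)]
  simp only [diffQuotCoeffs, fromBlocks_conjTranspose, fromBlocks_multiply, diffQuotCov]
  congr 1 <;> ext i j <;>
    simp [kernelMatrix, toBlocks₁₁, toBlocks₁₂, toBlocks₂₁, toBlocks₂₂, mul_diagonal,
      diagonal_mul, mixedDiff] <;> ring

end DiffQuotCov

theorem posSemidef_diffQuotCov {I : Set ℝ} {k : ℝ → ℝ → ℝ}
    (hpsd : ∀ (n : ℕ) (t : Fin n → ℝ), (∀ i, t i ∈ I) →
      (Matrix.of fun i j => k (t i) (t j)).PosSemidef)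
    {ι : Type*} [Fintype ι] {t d : ι → ℝ} {h : ℝ} (ht : ∀ i, t i ∈ I)
    (htd : ∀ i, t i + h * d i ∈ I) : (diffQuotCov k t d h).PosSemidef := by
  classical
  rw [diffQuotCov_eq_conjTranspose_mul_mul]
  refine (posSemidef_kernelMatrix_of_fin hpsd ?_).conjTranspose_mul_mul_same _
  rintro (i | i)
  exacts [ht i, htd i]

theorem tendsto_diffQuotCov {I : Set ℝ} {k : ℝ → ℝ → ℝ} (hI : I.OrdConnected)
    (hnt : I.Nontrivial) (hk : ContDiffOn ℝ 2 (Function.uncurry k) (I ×ˢ I))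
    {ι : Type*} {t d : ι → ℝ} (ht : ∀ i, t i ∈ I) (hd : ∀ i, d i ≠ 0)
    (htd : ∀ i, ∀ᶠ h in 𝓝[>] 0, t i + h * d i ∈ I) :
    Tendsto (diffQuotCov k t d) (𝓝[>] 0)
      (𝓝 (fromBlocks (kernelMatrix k t) (of fun i j => pdy I k (t i) (t j))
        (of fun i j => pdx I k (t i) (t j)) (of fun i j => pdxy I k (t i) (t j)))) := by
  have hU := hI.uniqueDiffOn hnt
  have hk₁ : DifferentiableOn ℝ (Function.uncurry k) (I ×ˢ I) := hk.differentiableOn two_ne_zero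
  have hpdy : ContDiffOn ℝ 1 (Function.uncurry (pdy I k)) (I ×ˢ I) := hk.uncurry_pdy hU
  have hy : ∀ x ∈ I, ∀ y ∈ I, HasDerivWithinAt (k x) (pdy I k x y) I y :=
    fun x hx y hy => hasDerivWithinAt_pdy hk₁ hx hy
  have hxy : ∀ x ∈ I, ∀ y ∈ I, HasDerivWithinAt (fun x => pdy I k x y) (pdxy I k x y) I x :=
    fun x hx y hy => hasDerivWithinAt_pdx (hpdy.differentiableOn one_ne_zero) hx hy
  refine tendsto_pi_nhds.2 fun a => tendsto_pi_nhds.2 fun b => ?_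
  rcases a with i | i <;> rcases b with j | j
  · exact tendsto_const_nhds
  · exact (hy _ (ht i) _ (ht j)).tendsto_slope_along (hd j) (htd j)
  · exact (hasDerivWithinAt_pdx hk₁ (ht i) (ht j)).tendsto_slope_along (hd i) (htd i)
  · exact tendsto_mixedDiff_div hI hy hxy (ht i) (ht j) (hd i) (hd j) (htd i) (htd j)
      (hpdy.continuousOn_uncurry_pdx hU _ (mk_mem_prod (ht i) (ht j)))

theorem derivative_gram_posSemidef_general
    (I : Set ℝ) (hI : I.OrdConnected) (k : ℝ → ℝ → ℝ)
    (hk : ContDiffOn ℝ 2 (Function.uncurry k) (I ×ˢ I))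
    (hpsd : ∀ (n : ℕ) (t : Fin n → ℝ), (∀ i, t i ∈ I) →
      (Matrix.of fun i j => k (t i) (t j)).PosSemidef)
    (n : ℕ) (t : Fin n → ℝ) (ht : ∀ i, t i ∈ I) :
    (Matrix.fromBlocks
      (Matrix.of fun i j => k (t i) (t j))
      (Matrix.of fun i j => pdy I k (t i) (t j))
      (Matrix.of fun i j => pdx I k (t i) (t j))
      (Matrix.of fun i j => pdxy I k (t i) (t j))).PosSemidef := by
  rcases I.subsingleton_or_nontrivial with hsub | hnt
  · -- All derivatives within a subsingleton vanish, and quotients with `d = 0` are `x / 0 = 0`.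
    convert posSemidef_diffQuotCov hpsd ht (d := 0) (h := 1) (by simpa using ht) using 1
    ext (i | i) (j | j) <;>
      simp [diffQuotCov, kernelMatrix, pdx, pdy, pdxy, hsub.derivWithin_eq_zero, ht]
  · choose c hc hct using fun i => hnt.exists_ne (t i)
    have hstep : ∀ i, ∀ᶠ h in 𝓝[>] (0 : ℝ), t i + h * (c i - t i) ∈ I := fun i => by
      filter_upwards [Ioc_mem_nhdsGT one_pos] with h hh
      simpa using hI.convex.add_smul_sub_mem (ht i) (hc i) (Ioc_subset_Icc_self hh)
    refine isClosed_setOf_posSemidef.mem_of_tendsto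
      (tendsto_diffQuotCov hI hnt hk ht (fun i => sub_ne_zero.2 (hct i)) hstep) ?_
    filter_upwards [eventually_all.2 hstep] with h hh
    exact posSemidef_diffQuotCov hpsd ht hh

/-- Let `k` be a `C²` symmetric positive semi-definite kernel on an interval `I`. Then for
any times `t 1, …, t n ∈ I`, the `2n × 2n` matrix with blocks `k (t i) (t j)`,
`∂k/∂y (t i) (t j)`, `∂k/∂x (t i) (t j)`, `∂²k/(∂x∂y) (t i) (t j)` — the covariance
structure of a GP with kernel `k` together with its mean-square derivative — is positive
semi-definite. -/
theorem derivative_gram_posSemidef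
    (I : Set ℝ) (hI : I.OrdConnected) (k : ℝ → ℝ → ℝ)
    (hk : ContDiffOn ℝ 2 (Function.uncurry k) (I ×ˢ I))
    (hsym : ∀ u ∈ I, ∀ v ∈ I, k u v = k v u)
    (hpsd : ∀ (n : ℕ) (t : Fin n → ℝ), (∀ i, t i ∈ I) →
      (Matrix.of fun i j => k (t i) (t j)).PosSemidef)
    (n : ℕ) (t : Fin n → ℝ) (ht : ∀ i, t i ∈ I) :
    (Matrix.fromBlocks
      (Matrix.of fun i j => k (t i) (t j))
      (Matrix.of fun i j => pdy I k (t i) (t j))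
      (Matrix.of fun i j => pdx I k (t i) (t j))
      (Matrix.of fun i j => pdxy I k (t i) (t j))).PosSemidef :=
  derivative_gram_posSemidef_general I hI k hk hpsd n t ht

end
end

section
/- Let (z^1,…,z^d) be independent real-valued square-integrable stochastic processes, and let f(t_1,…,t_d) = e_n(z^1_{t_1},…,z^d_{t_d}) with e_n the n-th elementary symmetric polynomial. Then cov(f(u_1,…,u_d), f(v_1,…,v_d)) = e_n(cov(z^1_{u_1}, z^1_{v_1}),…, cov(z^d_{u_d}, z^d_{v_d})) holds when each z^j is mean-zero. -/
open MeasureTheory ProbabilityTheory Finset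

noncomputable section

/-- The `n`-th elementary symmetric polynomial in the variables `x 1, …, x d`. -/
def esymFun {d : ℕ} (n : ℕ) (x : Fin d → ℝ) : ℝ :=
  ∑ s ∈ Finset.univ.powersetCard n, ∏ i ∈ s, x i

/-- Covariance of two real random variables: `cov(X,Y) = E[XY] − E[X]E[Y]`. -/
def covRV {Ω : Type*} [MeasurableSpace Ω] (P : Measure Ω) (X Y : Ω → ℝ) : ℝ :=
  (∫ ω, X ω * Y ω ∂P) - (∫ ω, X ω ∂P) * (∫ ω, Y ω ∂P)

lemma my_integrable_prod {Ω : Type*} [MeasurableSpace Ω] {P : Measure Ω} [IsProbabilityMeasure P]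
    {ι : Type*} {X : ι → Ω → ℝ} (hindep : iIndepFun X P)
    (hmeas : ∀ i, Measurable (X i)) (hint : ∀ i, Integrable (X i) P)
    (s : Finset ι) : Integrable (fun ω => ∏ i ∈ s, X i ω) P := by
  classical
  induction s using Finset.cons_induction with
  | empty => simpa using integrable_const (1 : ℝ)
  | cons a s ha ih =>
    have hfun : (∏ j ∈ s, X j) = fun ω => ∏ i ∈ s, X i ω := by funext ω; simp
    have hI : IndepFun (∏ j ∈ s, X j) (X a) P :=
      hindep.indepFun_finsetProd_of_notMem hmeas ha
    have h : Integrable (fun ω => (∏ j ∈ s, X j) ω * X a ω) P :=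
      hI.integrable_mul (hfun ▸ ih) (hint a)
    simp only [Finset.prod_cons]
    simpa [Finset.prod_apply, mul_comm] using h

lemma my_integral_prod {Ω : Type*} [MeasurableSpace Ω] {P : Measure Ω} [IsProbabilityMeasure P]
    {ι : Type*} {X : ι → Ω → ℝ} (hindep : iIndepFun X P)
    (hmeas : ∀ i, Measurable (X i)) (hint : ∀ i, Integrable (X i) P)
    (s : Finset ι) : ∫ ω, ∏ i ∈ s, X i ω ∂P = ∏ i ∈ s, ∫ ω, X i ω ∂P := by
  classical
  induction s using Finset.cons_induction with
  | empty => simp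
  | cons a s ha ih =>
    have hfun : (∏ j ∈ s, X j) = fun ω => ∏ i ∈ s, X i ω := by funext ω; simp
    have hI : IndepFun (∏ j ∈ s, X j) (X a) P :=
      hindep.indepFun_finsetProd_of_notMem hmeas ha
    have h1 : Integrable (∏ j ∈ s, X j) P :=
      hfun ▸ my_integrable_prod hindep hmeas hint s
    have h2 := hI.integral_mul_eq_mul_integral h1.aestronglyMeasurable (hint a).aestronglyMeasurable
    rw [hfun] at h2
    have h3 : ((fun ω => ∏ i ∈ s, X i ω) * X a) = fun ω => (∏ i ∈ s, X i ω) * X a ω := rfl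
    rw [h3] at h2
    simp only [Finset.prod_cons]
    rw [show (∫ ω, X a ω * ∏ i ∈ s, X i ω ∂P)
          = ∫ ω, (∏ i ∈ s, X i ω) * X a ω ∂P by congr 1; ext ω; ring,
        h2, ih]
    ring

/-- Let `z 1, …, z d` be independent mean-zero square-integrable real-valued stochastic
processes, and let `f(t₁,…,t_d) = e_n(z 1 (t₁), …, z d (t_d))` with `e_n` the `n`-th
elementary symmetric polynomial (`1 ≤ n ≤ d`). Then
`cov(f(u), f(v)) = e_n(cov(z 1 (u₁), z 1 (v₁)), …, cov(z d (u_d), z d (v_d)))`. -/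
theorem cov_esym_of_indep {Ω T : Type*} [MeasurableSpace Ω]
    (P : Measure Ω) [IsProbabilityMeasure P]
    {d : ℕ} (n : ℕ) (hn : 1 ≤ n) (hnd : n ≤ d)
    (z : Fin d → T → Ω → ℝ)
    (hmeas : ∀ j t, Measurable (z j t))
    (hL2 : ∀ j t, MemLp (z j t) 2 P)
    (hmean : ∀ j t, ∫ ω, z j t ω ∂P = 0)
    (hindep : iIndepFun (fun j ω => fun t => z j t ω) P)
    (u v : Fin d → T) :
    covRV P (fun ω => esymFun n (fun j => z j (u j) ω))
            (fun ω => esymFun n (fun j => z j (v j) ω)) =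
      esymFun n (fun j => covRV P (fun ω => z j (u j) ω) (fun ω => z j (v j) ω)) := by
  classical
  -- the per-coordinate factors for a pair of index sets
  set Y : Finset (Fin d) → Finset (Fin d) → Fin d → Ω → ℝ :=
    fun s t j ω => (if j ∈ s then z j (u j) ω else 1) * (if j ∈ t then z j (v j) ω else 1)
    with hY
  -- measurability / independence of the Y family
  have hYmeas : ∀ s t j, Measurable (Y s t j) := by
    intro s t j
    apply Measurable.mul <;> split_ifs <;>
      first | exact hmeas _ _ | exact measurable_const
  have hYindep : ∀ s t, iIndepFun (Y s t) P := by
    intro s t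
    have hg : ∀ j : Fin d, Measurable (fun f : T → ℝ =>
        (if j ∈ s then f (u j) else 1) * (if j ∈ t then f (v j) else 1)) := by
      intro j
      apply Measurable.mul <;> split_ifs <;>
        first | exact measurable_pi_apply _ | exact measurable_const
    exact hindep.comp _ hg
  have hYint : ∀ s t j, Integrable (Y s t j) P := by
    intro s t j
    by_cases hjs : j ∈ s <;> by_cases hjt : j ∈ t <;>
      simp only [hY, hjs, hjt, if_true, if_false, mul_one, one_mul]
    · have h := ((hL2 j (v j)).smul (hL2 j (u j))
        (p := 2) (q := 2) (r := 1))
      rw [memLp_one_iff_integrable] at h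
      exact h
    · exact (hL2 j (u j)).integrable one_le_two
    · exact (hL2 j (v j)).integrable one_le_two
    · exact integrable_const 1
  -- integral of each factor
  have hEY : ∀ s t j, ∫ ω, Y s t j ω ∂P =
      if j ∈ s then (if j ∈ t then ∫ ω, z j (u j) ω * z j (v j) ω ∂P else 0)
      else (if j ∈ t then 0 else 1) := by
    intro s t j
    by_cases hjs : j ∈ s <;> by_cases hjt : j ∈ t <;>
      simp [hY, hjs, hjt, hmean, measure_univ]
  -- rewriting a product over s as a product over univ
  have hprod_ite : ∀ (s : Finset (Fin d)) (a : Fin d → ℝ),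
      ∏ j ∈ s, a j = ∏ j, (if j ∈ s then a j else 1) := by
    intro s a
    rw [Finset.prod_ite_mem, Finset.univ_inter]
  -- expansion of the product of the two symmetric polynomials
  have hexpand : ∀ ω, (esymFun n fun j => z j (u j) ω) * (esymFun n fun j => z j (v j) ω)
      = ∑ s ∈ Finset.univ.powersetCard n, ∑ t ∈ Finset.univ.powersetCard n,
          ∏ j, Y s t j ω := by
    intro ω
    rw [esymFun, esymFun, Finset.sum_mul_sum]
    refine Finset.sum_congr rfl fun s _ => Finset.sum_congr rfl fun t _ => ?_
    rw [hprod_ite s, hprod_ite t, ← Finset.prod_mul_distrib]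
  -- independence of the evaluated processes
  have hWuindep : iIndepFun (fun j ω => z j (u j) ω) P :=
    hindep.comp (fun j f => f (u j)) (fun j => measurable_pi_apply _)
  have hWvindep : iIndepFun (fun j ω => z j (v j) ω) P :=
    hindep.comp (fun j f => f (v j)) (fun j => measurable_pi_apply _)
  have hWuint : ∀ j, Integrable (fun ω => z j (u j) ω) P :=
    fun j => (hL2 j (u j)).integrable one_le_two
  have hWvint : ∀ j, Integrable (fun ω => z j (v j) ω) P :=
    fun j => (hL2 j (v j)).integrable one_le_two
  -- every s in the powersetCard has an element
  have hne : ∀ s ∈ (Finset.univ : Finset (Fin d)).powersetCard n, s.Nonempty := by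
    intro s hs
    rw [Finset.mem_powersetCard] at hs
    exact Finset.card_pos.mp (hs.2 ▸ hn)
  -- means of the symmetric polynomials vanish
  have hmeanu : ∫ ω, esymFun n (fun j => z j (u j) ω) ∂P = 0 := by
    rw [show (fun ω => esymFun n (fun j => z j (u j) ω))
        = fun ω => ∑ s ∈ Finset.univ.powersetCard n, ∏ j ∈ s, z j (u j) ω from rfl]
    rw [integral_finset_sum _ (fun s _ =>
      my_integrable_prod hWuindep (fun j => hmeas j (u j)) hWuint s)]
    refine Finset.sum_eq_zero fun s hs => ?_
    rw [my_integral_prod hWuindep (fun j => hmeas j (u j)) hWuint s]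
    exact Finset.prod_eq_zero (hne s hs).choose_spec (hmean _ _)
  have hmeanv : ∫ ω, esymFun n (fun j => z j (v j) ω) ∂P = 0 := by
    rw [show (fun ω => esymFun n (fun j => z j (v j) ω))
        = fun ω => ∑ s ∈ Finset.univ.powersetCard n, ∏ j ∈ s, z j (v j) ω from rfl]
    rw [integral_finset_sum _ (fun s _ =>
      my_integrable_prod hWvindep (fun j => hmeas j (v j)) hWvint s)]
    refine Finset.sum_eq_zero fun s hs => ?_
    rw [my_integral_prod hWvindep (fun j => hmeas j (v j)) hWvint s]
    exact Finset.prod_eq_zero (hne s hs).choose_spec (hmean _ _)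
  -- the main second moment computation
  have hkey : ∫ ω, (esymFun n fun j => z j (u j) ω) * (esymFun n fun j => z j (v j) ω) ∂P
      = ∑ s ∈ Finset.univ.powersetCard n, ∏ j ∈ s, ∫ ω, z j (u j) ω * z j (v j) ω ∂P := by
    have h1 : (fun ω => (esymFun n fun j => z j (u j) ω) * (esymFun n fun j => z j (v j) ω))
        = fun ω => ∑ s ∈ Finset.univ.powersetCard n, ∑ t ∈ Finset.univ.powersetCard n,
            ∏ j, Y s t j ω := by funext ω; exact hexpand ω
    rw [h1]
    rw [integral_finset_sum _ (fun s _ => integrable_finset_sum _ (fun t _ =>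
      my_integrable_prod (hYindep s t) (hYmeas s t) (hYint s t) Finset.univ))]
    refine Finset.sum_congr rfl fun s hs => ?_
    rw [integral_finset_sum _ (fun t _ =>
      my_integrable_prod (hYindep s t) (hYmeas s t) (hYint s t) Finset.univ)]
    rw [Finset.sum_eq_single_of_mem s hs]
    · rw [my_integral_prod (hYindep s s) (hYmeas s s) (hYint s s) Finset.univ]
      rw [hprod_ite s (fun j => ∫ ω, z j (u j) ω * z j (v j) ω ∂P)]
      refine Finset.prod_congr rfl fun j _ => ?_
      rw [hEY]
      by_cases hjs : j ∈ s <;> simp [hjs]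
    · intro t ht hts
      rw [my_integral_prod (hYindep s t) (hYmeas s t) (hYint s t) Finset.univ]
      -- find an element in s \ t
      have hcard : s.card = t.card := by
        rw [Finset.mem_powersetCard] at hs ht
        rw [hs.2, ht.2]
      have : ¬ s ⊆ t := fun hsub =>
        hts ((Finset.eq_of_subset_of_card_le hsub (le_of_eq hcard.symm)).symm ▸ rfl)
      obtain ⟨j, hjs, hjt⟩ := Finset.not_subset.mp this
      refine Finset.prod_eq_zero (Finset.mem_univ j) ?_
      rw [hEY]
      simp [hjs, hjt]
  -- assemble
  rw [covRV, hmeanu, hmeanv, mul_zero, sub_zero, hkey, esymFun]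
  refine Finset.sum_congr rfl fun s _ => Finset.prod_congr rfl fun j _ => ?_
  rw [covRV, hmean, zero_mul, sub_zero]

end
end
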